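/- Suppose f : R → R satisfies the renewal equation f(z) = Σ_{j=1}^N c_j f(z − γ_j) + φ(z) with c_j > 0, Σ_{j=1}^N c_j = 1, distinct reals γ_j > 0, lim_{z→−∞} f(z) = 0, and |φ(z)| ≤ c_1 e^{−c_2 |z|} for all z ∈ R for some constants c_1, c_2 > 0. Then f is given by the convergent series f(z) = Σ_{n=0}^∞ L^n φ(z), where L φ(z) = Σ_{j=1}^N c_j φ(z − γ_j), i.e., f(z) = φ(z) + Σ_{n=1}^∞ Σ_{i_1,...,i_n} c_{i_1}···c_{i_n} φ(z − γ_{i_1} − ··· − γ_{i_n}). -/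
import Mathlib


open Finset Filter

/-- Renewal theorem: a solution of the renewal equation
`f(z) = ∑_j c_j f(z - γ_j) + φ(z)` with `c_j > 0`, `∑ c_j = 1`, distinct `γ_j > 0`,
`f(z) → 0` as `z → -∞`, and `|φ(z)| ≤ c₁ e^{-c₂|z|}`, is given by the series
`f(z) = ∑_{n≥0} L^n φ(z) = ∑_n ∑_{i₁,…,iₙ} c_{i₁}⋯c_{iₙ} φ(z - γ_{i₁} - ⋯ - γ_{iₙ})`. -/
theorem renewal_theorem_series (N : ℕ) (hN : 1 ≤ N)
    (c γ : Fin N → ℝ) (hc : ∀ j, 0 < c j) (hsum : ∑ j, c j = 1)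
    (hγ : ∀ j, 0 < γ j) (hdist : Function.Injective γ)
    (f φ : ℝ → ℝ)
    (hren : ∀ z, f z = (∑ j, c j * f (z - γ j)) + φ z)
    (hlim : Tendsto f atBot (nhds 0))
    (c₁ c₂ : ℝ) (hc₁ : 0 < c₁) (hc₂ : 0 < c₂)
    (hφ : ∀ z, |φ z| ≤ c₁ * Real.exp (-c₂ * |z|)) :
    ∀ z, f z = ∑' n : ℕ, ∑' i : Fin n → Fin N,
      (∏ k, c (i k)) * φ (z - ∑ k, γ (i k)) := by
  intro z
  classical
  have hNe : Nonempty (Fin N) := ⟨⟨0, hN⟩⟩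
  set g : ℕ → ℝ := fun n => ∑ i : Fin n → Fin N, (∏ k, c (i k)) * φ (z - ∑ k, γ (i k)) with hg
  set R : ℕ → ℝ := fun n => ∑ i : Fin n → Fin N, (∏ k, c (i k)) * f (z - ∑ k, γ (i k)) with hRdef
  -- sum of products of coefficients is 1
  have hprodsum : ∀ n : ℕ, ∑ i : Fin n → Fin N, ∏ k, c (i k) = 1 := by
    intro n
    have h := Finset.prod_univ_sum (fun _ : Fin n => (univ : Finset (Fin N))) (fun _ j => c j)
    rw [Fintype.piFinset_univ] at h
    simp [hsum] at h
    exact h.symm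
  have hprodnonneg : ∀ {n : ℕ} (i : Fin n → Fin N), (0:ℝ) ≤ ∏ k, c (i k) := fun i =>
    Finset.prod_nonneg fun k _ => (hc (i k)).le
  -- minimum of γ
  obtain ⟨j0, _, hj0⟩ := Finset.exists_min_image (univ : Finset (Fin N)) γ ⟨_, Finset.mem_univ (Classical.arbitrary (Fin N))⟩
  set m := γ j0 with hm
  have hm0 : 0 < m := hγ j0
  have hslower : ∀ {n : ℕ} (i : Fin n → Fin N), (n : ℝ) * m ≤ ∑ k, γ (i k) := by
    intro n i
    have := Finset.card_nsmul_le_sum (univ : Finset (Fin n)) (fun k => γ (i k)) m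
      (fun k _ => hj0 (i k) (Finset.mem_univ _))
    simpa [nsmul_eq_mul] using this
  -- recurrence
  have hrec : ∀ n : ℕ, R n = g n + R (n + 1) := by
    intro n
    have hR1 : R (n + 1) = ∑ i : Fin n → Fin N, ∑ j : Fin N,
        (∏ k, c (i k)) * (c j * f (z - ∑ k, γ (i k) - γ j)) := by
      simp only [hRdef]
      rw [← (Fin.consEquiv (fun _ : Fin (n+1) => Fin N)).sum_comp]
      rw [Fintype.sum_prod_type, Finset.sum_comm]
      refine Finset.sum_congr rfl fun i _ => Finset.sum_congr rfl fun j _ => ?_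
      simp only [Fin.consEquiv_apply, Fin.prod_univ_succ, Fin.sum_univ_succ, Fin.cons_zero, Fin.cons_succ]
      ring_nf
    rw [hR1]; simp only [hg, hRdef]
    rw [← Finset.sum_add_distrib]
    refine Finset.sum_congr rfl fun i _ => ?_
    rw [hren (z - ∑ k, γ (i k))]
    rw [mul_add, Finset.mul_sum]
    ring
  -- partial sums
  have hpart : ∀ n : ℕ, f z = (∑ k ∈ Finset.range n, g k) + R n := by
    intro n
    induction n with
    | zero => simp [hRdef]
    | succ n ih => rw [Finset.sum_range_succ, ih, hrec n]; ring
  -- R tends to 0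
  have hR0 : Tendsto R atTop (nhds 0) := by
    rw [Metric.tendsto_atTop]
    intro ε hε
    have hlim' := Metric.tendsto_nhds.mp hlim (ε / 2) (by linarith)
    rw [Filter.eventually_atBot] at hlim'
    obtain ⟨M, hM⟩ := hlim'
    obtain ⟨n0, hn0⟩ := exists_nat_ge ((z - M) / m)
    refine ⟨n0, fun n hn => ?_⟩
    have hzM : ∀ i : Fin n → Fin N, z - ∑ k, γ (i k) ≤ M := by
      intro i
      have h1 : (z - M) / m ≤ (n : ℝ) := le_trans hn0 (by exact_mod_cast hn)
      have h2 : z - M ≤ (n : ℝ) * m := by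
        rw [div_le_iff₀ hm0] at h1; linarith
      have := hslower i
      linarith
    have hbound : |R n| ≤ ε / 2 := by
      calc |R n| ≤ ∑ i : Fin n → Fin N, |(∏ k, c (i k)) * f (z - ∑ k, γ (i k))| :=
            Finset.abs_sum_le_sum_abs _ _
        _ ≤ ∑ i : Fin n → Fin N, (∏ k, c (i k)) * (ε / 2) := by
            refine Finset.sum_le_sum fun i _ => ?_
            rw [abs_mul, abs_of_nonneg (hprodnonneg i)]
            refine mul_le_mul_of_nonneg_left ?_ (hprodnonneg i)
            have := hM _ (hzM i)
            rw [Real.dist_eq, sub_zero] at this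
            exact this.le
        _ = ε / 2 := by rw [← Finset.sum_mul, hprodsum, one_mul]
    rw [Real.dist_eq, sub_zero]
    linarith
  -- summability of g
  have hgbound : ∀ n : ℕ, |g n| ≤ (c₁ * Real.exp (c₂ * |z|)) * Real.exp (-c₂ * m) ^ n := by
    intro n
    calc |g n| ≤ ∑ i : Fin n → Fin N, |(∏ k, c (i k)) * φ (z - ∑ k, γ (i k))| :=
          Finset.abs_sum_le_sum_abs _ _
      _ ≤ ∑ i : Fin n → Fin N, (∏ k, c (i k)) * ((c₁ * Real.exp (c₂ * |z|)) * Real.exp (-c₂ * m) ^ n) := by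
          refine Finset.sum_le_sum fun i _ => ?_
          rw [abs_mul, abs_of_nonneg (hprodnonneg i)]
          refine mul_le_mul_of_nonneg_left ?_ (hprodnonneg i)
          set s := ∑ k, γ (i k) with hs
          have hsn : (n : ℝ) * m ≤ s := hslower i
          have habs : s - |z| ≤ |z - s| := by
            rcases abs_cases z with ⟨h1, _⟩ | ⟨h1, _⟩ <;> rcases abs_cases (z - s) with ⟨h2, _⟩ | ⟨h2, _⟩ <;> linarith
          have hexp : Real.exp (-c₂ * |z - s|) ≤ Real.exp (c₂ * |z|) * Real.exp (-c₂ * m) ^ n := by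
            rw [← Real.exp_nat_mul, ← Real.exp_add]
            apply Real.exp_le_exp.mpr
            have : -c₂ * |z - s| ≤ -c₂ * (s - |z|) := by
              apply mul_le_mul_of_nonpos_left habs (by linarith)
            have h2 : (n:ℝ) * (-c₂ * m) = -c₂ * ((n:ℝ)*m) := by ring
            nlinarith [mul_le_mul_of_nonneg_left hsn hc₂.le]
          calc |φ (z - s)| ≤ c₁ * Real.exp (-c₂ * |z - s|) := hφ _
            _ ≤ c₁ * (Real.exp (c₂ * |z|) * Real.exp (-c₂ * m) ^ n) :=
                mul_le_mul_of_nonneg_left hexp hc₁.le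
            _ = (c₁ * Real.exp (c₂ * |z|)) * Real.exp (-c₂ * m) ^ n := by ring
      _ = (c₁ * Real.exp (c₂ * |z|)) * Real.exp (-c₂ * m) ^ n := by
          rw [← Finset.sum_mul, hprodsum, one_mul]
  have hsummable : Summable g := by
    apply Summable.of_abs
    refine Summable.of_nonneg_of_le (fun n => abs_nonneg _) hgbound ?_
    apply Summable.mul_left
    exact summable_geometric_of_lt_one (Real.exp_nonneg _)
      (Real.exp_lt_one_iff.mpr (by nlinarith))
  -- conclude
  have h1 : Tendsto (fun n => ∑ k ∈ Finset.range n, g k) atTop (nhds (∑' n, g n)) :=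
    hsummable.hasSum.tendsto_sum_nat
  have h2 : Tendsto (fun n => ∑ k ∈ Finset.range n, g k) atTop (nhds (f z)) := by
    have : (fun n => ∑ k ∈ Finset.range n, g k) = fun n => f z - R n := by
      funext n; rw [hpart n]; ring
    rw [this]
    simpa using tendsto_const_nhds.sub hR0
  have := tendsto_nhds_unique h1 h2
  rw [← this]
  exact (tsum_congr fun n => tsum_fintype _).symm
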